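/- Let q be a prime power of characteristic p, let k ≥ 1 and u ≥ 1 be integers, and set t = ⌊log_p k⌋ + 1. Then the density λ_{q,k}(p^t u) of k-normal elements of F_{q^{p^t u}} over F_q satisfies λ_{q,k}(p^t u) ≥ λ_{q,0}(u)/q^k, where λ_{q,0}(u) is the density of normal elements of F_{q^u} over F_q. -/

import Mathlib

/-!
Let `σ` be the `q`-Frobenius of `E1`, so that `E1` is a torsion `F_q[X]`-module, and call the
generator of the annihilator `{g | g(σ) α = 0}` the order of `α`. The conjugates of `α` span a
space of dimension `deg (order α)`, so `α` is `k`-normal iff its order has degree `n - k`, and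
normal iff its order is `X^n - 1`. As `k < p^t`, in characteristic `p`
`X^n - 1 = (X^u - 1)^(p^t) = (X^u - 1) * s * (X - 1)^k` with every prime factor of `s` dividing
`X^u - 1`. Then `α` has order `(X^u - 1) * s` iff `s(σ) α` has order `X^u - 1`, and `s(σ)` maps
onto `ker (σ^u - 1) ≅ F_{q^u}` with kernel of size `q^(deg s)`. So `E1` has `q^(n - u - k)` times
as many (`k`-normal) elements of order `(X^u - 1) * s` as `F_{q^u}` has normal elements.
-/

open Polynomial

namespace Module.End

variable {K V : Type*} [Field K] [AddCommGroup V] [Module K V] (T : Module.End K V) (v : V)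

noncomputable def aevalAt : K[X] →ₗ[K] V :=
  LinearMap.applyₗ v ∘ₗ (aeval T).toLinearMap

noncomputable def orderIdeal : Ideal K[X] where
  carrier := {g | aeval T g v = 0}
  add_mem' ha hb := by simp_all
  zero_mem' := by simp
  smul_mem' c g hg := by simp_all

variable {T v}

@[simp]
theorem aevalAt_apply (g : K[X]) : aevalAt T v g = aeval T g v := rfl

theorem mem_orderIdeal {g : K[X]} : g ∈ orderIdeal T v ↔ aeval T g v = 0 := Iff.rfl

theorem mem_orderIdeal_aeval {g s : K[X]} :
    g ∈ orderIdeal T (aeval T s v) ↔ g * s ∈ orderIdeal T v := by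
  rw [mem_orderIdeal, mem_orderIdeal, map_mul, Module.End.mul_apply]

theorem finrank_range_aevalAt {g : K[X]} (h : orderIdeal T v = Ideal.span {g}) :
    Module.finrank K (LinearMap.range (aevalAt T v)) = g.natDegree := by
  have hker : LinearMap.ker (aevalAt T v) = (Ideal.span {g}).restrictScalars K := by
    rw [← h]; rfl
  rw [← finrank_quotient_span_eq_natDegree, ← (aevalAt T v).quotKerEquivRange.finrank_eq, hker]
  exact (Submodule.Quotient.restrictScalarsEquiv K _).finrank_eq

/-- For `←`: if the order `g₀` of `v` were a proper divisor of `f * s`, some prime `π ∣ f` would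
divide `f * s / g₀`, and then `f / π` would already annihilate `s(T) v`. -/
theorem orderIdeal_eq_span_mul_iff {f s : K[X]} (hfs : f * s ≠ 0)
    (hrad : ∀ π : K[X], Prime π → π ∣ s → π ∣ f) :
    orderIdeal T v = Ideal.span {f * s} ↔ orderIdeal T (aeval T s v) = Ideal.span {f} := by
  have hs : s ≠ 0 := right_ne_zero_of_mul hfs
  constructor
  · intro h
    ext g
    rw [mem_orderIdeal_aeval, h, Ideal.mem_span_singleton, Ideal.mem_span_singleton,
      mul_dvd_mul_iff_right hs]
  · intro h
    obtain ⟨g₀, hg₀⟩ := Submodule.IsPrincipal.principal (orderIdeal T v)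
    have hmem : ∀ g, g ∈ orderIdeal T v ↔ g₀ ∣ g := fun g => by
      rw [hg₀, Ideal.submodule_span_eq, Ideal.mem_span_singleton]
    have hfs_mem : f * s ∈ orderIdeal T v := by
      rw [← mem_orderIdeal_aeval, h]
      exact Ideal.mem_span_singleton_self f
    obtain ⟨c, hc⟩ := (hmem _).mp hfs_mem
    have hc0 : c ≠ 0 := by rintro rfl; exact hfs (by rw [hc, mul_zero])
    have hcu : IsUnit c := by
      by_contra hcu
      obtain ⟨π, hπ, c', rfl⟩ := WfDvdMonoid.exists_irreducible_factor hcu hc0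
      have hπf : π ∣ f := by
        rcases hπ.prime.dvd_or_dvd ⟨g₀ * c', by rw [hc]; ring⟩ with hπf | hπs
        exacts [hπf, hrad π hπ.prime hπs]
      obtain ⟨w, rfl⟩ := hπf
      have hw : w ∈ orderIdeal T (aeval T s v) := by
        rw [mem_orderIdeal_aeval, hmem]
        refine ⟨c', mul_left_cancel₀ hπ.ne_zero ?_⟩
        calc π * (w * s) = π * w * s := by ring
          _ = π * (g₀ * c') := by rw [hc]; ring
      rw [h, Ideal.mem_span_singleton] at hw
      have hw0 : w ≠ 0 := by rintro rfl; exact hfs (by simp)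
      obtain ⟨d, hd⟩ := hw
      exact hπ.not_isUnit (isUnit_of_dvd_one ⟨d, mul_left_cancel₀ hw0 (by linear_combination hd)⟩)
    rw [hc, Ideal.span_singleton_mul_right_unit hcu, ← Ideal.submodule_span_eq, hg₀]

theorem span_pow_apply_eq_range_aevalAt {g : K[X]} (hg : g.Monic) (hgv : g ∈ orderIdeal T v)
    {d : ℕ} (hd : g.natDegree ≤ d) :
    Submodule.span K (Set.range fun i : Fin d => (T ^ (i : ℕ)) v) =
      LinearMap.range (aevalAt T v) := by
  apply le_antisymm
  · rw [Submodule.span_le]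
    rintro _ ⟨i, rfl⟩
    exact ⟨X ^ (i : ℕ), by simp⟩
  · rintro _ ⟨f, rfl⟩
    have hmod : aevalAt T v f = aevalAt T v (f %ₘ g) := by
      conv_lhs => rw [← modByMonic_add_div f g]
      rw [map_add, aevalAt_apply (g * _), mul_comm, map_mul, Module.End.mul_apply,
        mem_orderIdeal.mp hgv, map_zero, add_zero]
    rw [hmod, aevalAt_apply, aeval_eq_sum_range, LinearMap.sum_apply]
    refine Submodule.sum_mem _ fun i _ => ?_
    by_cases hid : i < d
    · exact Submodule.smul_mem _ _ (Submodule.subset_span ⟨⟨i, hid⟩, rfl⟩)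
    · have hlt : (f %ₘ g).degree < i :=
        (degree_modByMonic_lt f hg).trans_le (degree_le_of_natDegree_le (by omega))
      rw [coeff_eq_zero_of_degree_lt hlt, zero_smul]
      exact Submodule.zero_mem _

end Module.End

open Module.End

section XPowSubOne

variable {R : Type*} [CommRing R] [IsDomain R] {n : ℕ}

theorem natDegree_X_pow_sub_one (n : ℕ) : (X ^ n - 1 : R[X]).natDegree = n := by
  simpa using natDegree_X_pow_sub_C (n := n) (r := (1 : R))

theorem X_pow_sub_one_ne_zero (hn : 0 < n) : (X ^ n - 1 : R[X]) ≠ 0 := by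
  simpa using X_pow_sub_C_ne_zero hn (1 : R)

theorem natDegree_add_natDegree_of_mul_eq_X_pow_sub_one {g h : R[X]} (hn : 0 < n)
    (hgh : g * h = X ^ n - 1) : g.natDegree + h.natDegree = n := by
  have hgh0 : g * h ≠ 0 := hgh ▸ X_pow_sub_one_ne_zero hn
  rw [← natDegree_mul (left_ne_zero_of_mul hgh0) (right_ne_zero_of_mul hgh0), hgh,
    natDegree_X_pow_sub_one]

theorem natDegree_X_sub_one : (X - 1 : R[X]).natDegree = 1 := by
  simpa using natDegree_X_sub_C (1 : R)

end XPowSubOne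

theorem exists_X_pow_sub_one_mul_mul_X_sub_one_pow_eq {K : Type*} [Field K] {p : ℕ}
    (hp : p.Prime) [CharP K p] {t k u : ℕ} (hk : k < p ^ t) (hu : 0 < u) :
    ∃ s : K[X], (X ^ u - 1) * s * (X - 1) ^ k = X ^ (p ^ t * u) - 1 ∧
      (∀ π : K[X], Prime π → π ∣ s → π ∣ X ^ u - 1) ∧ s.natDegree + u + k = p ^ t * u := by
  have : Fact p.Prime := ⟨hp⟩
  obtain ⟨s, hs⟩ : (X - 1 : K[X]) ^ k ∣ (X ^ u - 1) ^ (p ^ t - 1) :=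
    (pow_dvd_pow_of_dvd (sub_one_dvd_pow_sub_one X u) k).trans (pow_dvd_pow _ (by omega))
  have hfactor : (X ^ u - 1) * s * (X - 1) ^ k = X ^ (p ^ t * u) - 1 :=
    calc (X ^ u - 1) * s * (X - 1) ^ k = (X ^ u - 1) * (X ^ u - 1) ^ (p ^ t - 1) := by
          rw [hs]; ring
      _ = (X ^ u - 1) ^ p ^ t := by rw [← pow_succ']; congr 1; omega
      _ = X ^ (p ^ t * u) - 1 := by rw [sub_pow_char_pow, one_pow, ← pow_mul, mul_comm]
  refine ⟨s, hfactor, fun π hπ hπs => hπ.dvd_of_dvd_pow (hs ▸ hπs.mul_left _), ?_⟩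
  have hne : (X ^ u - 1) * s * (X - 1) ^ k ≠ 0 :=
    hfactor ▸ X_pow_sub_one_ne_zero (Nat.mul_pos (pow_pos hp.pos t) hu)
  have hdeg := congrArg natDegree hfactor
  rw [natDegree_mul (left_ne_zero_of_mul hne) (right_ne_zero_of_mul hne),
    natDegree_mul (left_ne_zero_of_mul (left_ne_zero_of_mul hne))
      (right_ne_zero_of_mul (left_ne_zero_of_mul hne))] at hdeg
  simp only [natDegree_pow, natDegree_X_pow_sub_one, natDegree_X_sub_one] at hdeg
  omega

theorem LinearMap.natCard_preimage_of_subset_range {R V W : Type*} [Ring R] [AddCommGroup V]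
    [Module R V] [AddCommGroup W] [Module R W] [Finite V] (f : V →ₗ[R] W) {s : Set W}
    (hs : s ⊆ Set.range f) :
    Nat.card (f ⁻¹' s) = Nat.card (LinearMap.ker f) * Nat.card s := by
  have : Finite s := ((Set.finite_range f).subset hs).to_subtype
  have := Fintype.ofFinite s
  have hfib : ∀ b : s, Nat.card {a // f a = b} = Nat.card (LinearMap.ker f) := by
    rintro ⟨_, hb⟩
    obtain ⟨a, rfl⟩ := hs hb
    exact Nat.card_congr (f.toAddMonoidHom.fiberEquivKer a)
  rw [← Nat.card_congr (Equiv.sigmaSubtypeFiberEquivSubtype (p := (· ∈ f ⁻¹' s)) (q := (· ∈ s))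
    f fun _ => Iff.rfl), Nat.card_sigma, Finset.sum_congr rfl fun b _ => hfib b,
    Finset.sum_const, Finset.card_univ, smul_eq_mul, Nat.card_eq_fintype_card (α := s), mul_comm]

namespace FiniteField

variable (K L : Type*) [Field K] [Fintype K] [Field L] [Algebra K L]

noncomputable def frobeniusEnd : Module.End K L := (frobeniusAlgHom K L).toLinearMap

variable {K L}

theorem frobeniusEnd_pow_apply (i : ℕ) (x : L) :
    (frobeniusEnd K L ^ i) x = x ^ Fintype.card K ^ i := by
  induction i with
  | zero => simp
  | succ i ih =>
    rw [pow_succ', Module.End.mul_apply, ih, pow_succ, pow_mul]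
    rfl

theorem aeval_frobeniusEnd_apply (g : K[X]) (x : L) :
    aeval (frobeniusEnd K L) g x =
      ∑ i ∈ Finset.range (g.natDegree + 1), g.coeff i • x ^ Fintype.card K ^ i := by
  simp [aeval_eq_sum_range, frobeniusEnd_pow_apply]

theorem map_aeval_frobeniusEnd {M : Type*} [Field M] [Algebra K M] (φ : L →ₐ[K] M)
    (g : K[X]) (x : L) :
    φ (aeval (frobeniusEnd K L) g x) = aeval (frobeniusEnd K M) g (φ x) := by
  simp [aeval_frobeniusEnd_apply]

theorem aeval_frobeniusEnd_X_pow_finrank_sub_one [Finite L] :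
    aeval (frobeniusEnd K L) (X ^ Module.finrank K L - 1 : K[X]) = 0 := by
  have := Fintype.ofFinite L
  ext x
  simp [frobeniusEnd_pow_apply, ← Module.card_eq_pow_finrank, FiniteField.pow_card]

variable (L) in
noncomputable def linearized (g : K[X]) : L[X] :=
  ∑ i ∈ Finset.range (g.natDegree + 1), C (algebraMap K L (g.coeff i)) * X ^ Fintype.card K ^ i

theorem eval_linearized (g : K[X]) (x : L) :
    (linearized L g).eval x = aeval (frobeniusEnd K L) g x := by
  simp [linearized, eval_finsetSum, aeval_frobeniusEnd_apply, Algebra.smul_def]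

theorem natDegree_linearized_le (g : K[X]) :
    (linearized L g).natDegree ≤ Fintype.card K ^ g.natDegree := by
  refine natDegree_sum_le_of_forall_le _ _ fun i hi => (natDegree_C_mul_le _ _).trans ?_
  rw [natDegree_X_pow]
  exact Nat.pow_le_pow_right Fintype.card_pos (Nat.lt_succ_iff.mp (Finset.mem_range.mp hi))

theorem linearized_ne_zero {g : K[X]} (hg : g ≠ 0) : linearized L g ≠ 0 := by
  intro h
  have hcoeff := congrArg (coeff · (Fintype.card K ^ g.natDegree)) h
  simp only [linearized, finsetSum_coeff, coeff_C_mul, coeff_X_pow, coeff_zero,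
    Nat.pow_right_injective Fintype.one_lt_card |>.eq_iff] at hcoeff
  simp at hcoeff
  exact hg hcoeff

theorem finrank_ker_aeval_frobeniusEnd_le [Finite L] {g : K[X]} (hg : g ≠ 0) :
    Module.finrank K (LinearMap.ker (aeval (frobeniusEnd K L) g)) ≤ g.natDegree := by
  classical
  have := Fintype.ofFinite L
  set W := LinearMap.ker (aeval (frobeniusEnd K L) g)
  have hcard : Nat.card W ≤ Fintype.card K ^ g.natDegree :=
    calc Nat.card W = (W : Set L).toFinset.card := Nat.card_eq_card_toFinset _
      _ ≤ (linearized L g).natDegree := card_le_degree_of_subset_roots fun x hx => by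
          rw [mem_roots (linearized_ne_zero hg), IsRoot, eval_linearized]
          exact LinearMap.mem_ker.mp (Set.mem_toFinset.mp hx)
      _ ≤ Fintype.card K ^ g.natDegree := natDegree_linearized_le g
  rw [Module.natCard_eq_pow_finrank (K := K), Nat.card_eq_fintype_card] at hcard
  exact (Nat.pow_le_pow_iff_right Fintype.one_lt_card).mp hcard

theorem range_aeval_frobeniusEnd_le_ker [Finite L] {g h : K[X]}
    (hgh : g * h = X ^ Module.finrank K L - 1) :
    LinearMap.range (aeval (frobeniusEnd K L) g) ≤ LinearMap.ker (aeval (frobeniusEnd K L) h) := by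
  rintro _ ⟨x, rfl⟩
  rw [LinearMap.mem_ker, ← Module.End.mul_apply, ← map_mul, mul_comm, hgh,
    aeval_frobeniusEnd_X_pow_finrank_sub_one, LinearMap.zero_apply]

theorem finrank_ker_aeval_frobeniusEnd [Finite L] {g h : K[X]}
    (hgh : g * h = X ^ Module.finrank K L - 1) :
    Module.finrank K (LinearMap.ker (aeval (frobeniusEnd K L) g)) = g.natDegree := by
  have hgh0 : g * h ≠ 0 := hgh ▸ X_pow_sub_one_ne_zero Module.finrank_pos
  have := natDegree_add_natDegree_of_mul_eq_X_pow_sub_one Module.finrank_pos hgh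
  have := LinearMap.finrank_range_add_finrank_ker (aeval (frobeniusEnd K L) g)
  have := Submodule.finrank_mono (range_aeval_frobeniusEnd_le_ker hgh)
  have := finrank_ker_aeval_frobeniusEnd_le (L := L) (left_ne_zero_of_mul hgh0)
  have := finrank_ker_aeval_frobeniusEnd_le (L := L) (right_ne_zero_of_mul hgh0)
  omega

theorem range_aeval_frobeniusEnd [Finite L] {g h : K[X]}
    (hgh : g * h = X ^ Module.finrank K L - 1) :
    LinearMap.range (aeval (frobeniusEnd K L) g) = LinearMap.ker (aeval (frobeniusEnd K L) h) := by
  refine Submodule.eq_of_le_of_finrank_eq (range_aeval_frobeniusEnd_le_ker hgh) ?_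
  have hrank := LinearMap.finrank_range_add_finrank_ker (aeval (frobeniusEnd K L) g)
  rw [finrank_ker_aeval_frobeniusEnd hgh] at hrank
  rw [finrank_ker_aeval_frobeniusEnd ((mul_comm h g).trans hgh)]
  have := natDegree_add_natDegree_of_mul_eq_X_pow_sub_one Module.finrank_pos hgh
  omega

theorem X_pow_finrank_sub_one_mem_orderIdeal [Finite L] (x : L) :
    X ^ Module.finrank K L - 1 ∈ orderIdeal (frobeniusEnd K L) x := by
  rw [mem_orderIdeal, aeval_frobeniusEnd_X_pow_finrank_sub_one, LinearMap.zero_apply]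

variable (K L) in
/-- The elements of `L` whose order with respect to the Frobenius is `g`, up to a unit. -/
def withOrder (g : K[X]) : Set L := {x | orderIdeal (frobeniusEnd K L) x = Ideal.span {g}}

theorem span_pow_card_pow_eq_range_aevalAt [Finite L] (x : L) :
    Submodule.span K (Set.range fun i : Fin (Module.finrank K L) => x ^ Fintype.card K ^ (i : ℕ)) =
      LinearMap.range (aevalAt (frobeniusEnd K L) x) := by
  simp_rw [← frobeniusEnd_pow_apply]
  exact span_pow_apply_eq_range_aevalAt (monic_X_pow_sub (by simpa using Module.finrank_pos))
    (X_pow_finrank_sub_one_mem_orderIdeal x) (natDegree_X_pow_sub_one _).le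

theorem finrank_span_pow_card_pow_of_mem_withOrder [Finite L] {g : K[X]} {x : L}
    (hx : x ∈ withOrder K L g) :
    Module.finrank K (Submodule.span K
      (Set.range fun i : Fin (Module.finrank K L) => x ^ Fintype.card K ^ (i : ℕ))) =
        g.natDegree := by
  rw [span_pow_card_pow_eq_range_aevalAt, finrank_range_aevalAt hx]

theorem setOf_finrank_span_pow_card_pow_eq_finrank [Finite L] :
    {x : L | Module.finrank K (Submodule.span K
      (Set.range fun i : Fin (Module.finrank K L) => x ^ Fintype.card K ^ (i : ℕ))) =
        Module.finrank K L} = withOrder K L (X ^ Module.finrank K L - 1) := by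
  ext x
  refine ⟨fun hx => ?_, fun hx =>
    (finrank_span_pow_card_pow_of_mem_withOrder hx).trans (natDegree_X_pow_sub_one _)⟩
  obtain ⟨g₀, hg₀⟩ := Submodule.IsPrincipal.principal (orderIdeal (frobeniusEnd K L) x)
  rw [Ideal.submodule_span_eq] at hg₀
  rw [Set.mem_ofPred_eq, span_pow_card_pow_eq_range_aevalAt, finrank_range_aevalAt hg₀] at hx
  have hdvd : g₀ ∣ X ^ Module.finrank K L - 1 := by
    rw [← Ideal.mem_span_singleton, ← hg₀]
    exact X_pow_finrank_sub_one_mem_orderIdeal x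
  change orderIdeal _ x = _
  rw [hg₀, Ideal.span_singleton_eq_span_singleton]
  exact associated_of_dvd_of_natDegree_le hdvd (X_pow_sub_one_ne_zero Module.finrank_pos)
    (by rw [natDegree_X_pow_sub_one, hx])

theorem card_withOrder_mul [Finite L] {f s r : K[X]}
    (hfsr : f * s * r = X ^ Module.finrank K L - 1) (hrad : ∀ π : K[X], Prime π → π ∣ s → π ∣ f) :
    Nat.card (withOrder K L (f * s)) =
      Fintype.card K ^ s.natDegree * Nat.card (withOrder K L f) := by
  have hfs : f * s ≠ 0 := left_ne_zero_of_mul (hfsr ▸ X_pow_sub_one_ne_zero Module.finrank_pos)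
  have hsfr : s * (f * r) = X ^ Module.finrank K L - 1 := by rw [← hfsr]; ring
  have hpre : withOrder K L (f * s) = aeval (frobeniusEnd K L) s ⁻¹' withOrder K L f :=
    Set.ext fun _ => orderIdeal_eq_span_mul_iff hfs hrad
  have hsub : withOrder K L f ⊆ Set.range (aeval (frobeniusEnd K L) s) := by
    intro b (hb : orderIdeal _ b = _)
    have hfb : aeval (frobeniusEnd K L) f b = 0 := by
      rw [← mem_orderIdeal, hb]
      exact Ideal.mem_span_singleton_self f
    change b ∈ LinearMap.range (aeval (frobeniusEnd K L) s)
    rw [range_aeval_frobeniusEnd hsfr, LinearMap.mem_ker, mul_comm, map_mul, Module.End.mul_apply,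
      hfb, map_zero]
  rw [hpre, LinearMap.natCard_preimage_of_subset_range _ hsub,
    Module.natCard_eq_pow_finrank (K := K), finrank_ker_aeval_frobeniusEnd hsfr,
    Nat.card_eq_fintype_card (α := K)]

theorem card_withOrder_of_algHom {M : Type*} [Field M] [Algebra K M] [Finite M] (φ : L →ₐ[K] M)
    (hLM : Module.finrank K L ∣ Module.finrank K M) {g : K[X]}
    (hg : g ∣ X ^ Module.finrank K L - 1) :
    Nat.card (withOrder K M g) = Nat.card (withOrder K L g) := by
  have : Finite L := Finite.of_injective φ φ.injective
  have horder (x : L) :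
      orderIdeal (frobeniusEnd K M) (φ x) = orderIdeal (frobeniusEnd K L) x := by
    ext g
    rw [mem_orderIdeal, mem_orderIdeal, ← map_aeval_frobeniusEnd, map_eq_zero_iff φ φ.injective]
  have hrange : LinearMap.range φ.toLinearMap =
      LinearMap.ker (aeval (frobeniusEnd K M) (X ^ Module.finrank K L - 1 : K[X])) := by
    obtain ⟨h, hh⟩ := dvd_pow_sub_one_of_dvd (r := (X : K[X])) hLM
    refine Submodule.eq_of_le_of_finrank_eq ?_ ?_
    · rintro _ ⟨x, rfl⟩
      rw [LinearMap.mem_ker, AlgHom.toLinearMap_apply, ← map_aeval_frobeniusEnd,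
        aeval_frobeniusEnd_X_pow_finrank_sub_one, LinearMap.zero_apply, map_zero]
    · rw [LinearMap.finrank_range_of_inj φ.injective, finrank_ker_aeval_frobeniusEnd hh.symm,
        natDegree_X_pow_sub_one]
  have himage : withOrder K M g = φ '' withOrder K L g := by
    ext y
    constructor
    · intro (hy : orderIdeal _ y = _)
      have hker :
          y ∈ LinearMap.ker (aeval (frobeniusEnd K M) (X ^ Module.finrank K L - 1 : K[X])) := by
        rw [LinearMap.mem_ker, ← mem_orderIdeal, hy]
        exact Ideal.mem_span_singleton.mpr hg
      obtain ⟨x, rfl⟩ := hrange ▸ hker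
      exact ⟨x, (horder x).symm.trans hy, rfl⟩
    · rintro ⟨x, hx, rfl⟩
      exact (horder x).trans hx
  rw [himage]
  exact Nat.card_image_of_injective φ.injective _

end FiniteField

open FiniteField

theorem density_k_normal_ge_general
    (q p k u : ℕ) (hp : p.Prime)
    (hu : 1 ≤ u)
    (Fq : Type) [Field Fq] [Fintype Fq] (hcard : Fintype.card Fq = q) [CharP Fq p]
    (E1 : Type) [Field E1] [Algebra Fq E1]
    (hE1 : Module.finrank Fq E1 = p ^ (Nat.log p k + 1) * u)
    (E2 : Type) [Field E2] [Algebra Fq E2]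
    (hE2 : Module.finrank Fq E2 = u) :
    (Nat.card {α : E1 | Module.finrank Fq
          (Submodule.span Fq
            (Set.range fun i : Fin (p ^ (Nat.log p k + 1) * u) => α ^ q ^ (i : ℕ)))
          = p ^ (Nat.log p k + 1) * u - k} : ℝ) / q ^ (p ^ (Nat.log p k + 1) * u)
      ≥ ((Nat.card {α : E2 | Module.finrank Fq
            (Submodule.span Fq (Set.range fun i : Fin u => α ^ q ^ (i : ℕ)))
            = u} : ℝ) / q ^ u) / q ^ k := by
  subst hcard hE2
  obtain ⟨s, hfactor, hrad, hdeg⟩ := exists_X_pow_sub_one_mul_mul_X_sub_one_pow_eq (K := Fq) hp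
    (Nat.lt_pow_succ_log_self hp.one_lt k) hu
  have hdvd : Module.finrank Fq E2 ∣ Module.finrank Fq E1 := hE1 ▸ dvd_mul_left _ _
  rw [← hE1] at hfactor hdeg ⊢
  have : Module.Finite Fq E1 :=
    Module.finite_of_finrank_pos (hE1 ▸ Nat.mul_pos (pow_pos hp.pos _) hu)
  have : Finite E1 := Module.finite_of_finite Fq
  obtain ⟨φ⟩ := nonempty_algHom_of_finrank_dvd (F := Fq) (K := E2) (L := E1) hdvd
  have : Finite E2 := Finite.of_injective φ φ.injective
  have hdeg_fs := natDegree_add_natDegree_of_mul_eq_X_pow_sub_one Module.finrank_pos hfactor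
  rw [natDegree_pow, natDegree_X_sub_one, mul_one] at hdeg_fs
  rw [setOf_finrank_span_pow_card_pow_eq_finrank, ← card_withOrder_of_algHom φ hdvd dvd_rfl,
    ge_iff_le]
  calc _ = (Fintype.card Fq ^ s.natDegree * Nat.card (withOrder Fq E1
          (X ^ Module.finrank Fq E2 - 1)) : ℝ) / Fintype.card Fq ^ Module.finrank Fq E1 := by
        rw [← hdeg, pow_add, pow_add]
        field_simp
    _ = Nat.card (withOrder Fq E1 ((X ^ Module.finrank Fq E2 - 1) * s)) /
          (Fintype.card Fq : ℝ) ^ Module.finrank Fq E1 := by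
        rw [card_withOrder_mul hfactor hrad, Nat.cast_mul, Nat.cast_pow]
    _ ≤ _ := by
        gcongr
        exact Nat.card_mono (Set.toFinite _) fun x hx =>
          (finrank_span_pow_card_pow_of_mem_withOrder hx).trans (by omega)

/-- **Density of `k`-normal elements along the arithmetic progression `p^t u`.**
Let `q` be a prime power of characteristic `p`, `k ≥ 1`, `u ≥ 1`, and set
`t = ⌊log_p k⌋ + 1` and `n = p^t u`.  If `E1 = F_{q^n}` and `E2 = F_{q^u}`,
then the density of `k`-normal elements of `E1` over `F_q` is at least the
density of normal elements of `E2` over `F_q` divided by `q^k`. -/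
theorem density_k_normal_ge
    (q p k u : ℕ) (hp : p.Prime) (hq : ∃ m : ℕ, 0 < m ∧ q = p ^ m)
    (hk : 1 ≤ k) (hu : 1 ≤ u)
    (Fq : Type) [Field Fq] [Fintype Fq] (hcard : Fintype.card Fq = q) [CharP Fq p]
    (E1 : Type) [Field E1] [Algebra Fq E1]
    (hE1 : Module.finrank Fq E1 = p ^ (Nat.log p k + 1) * u)
    (E2 : Type) [Field E2] [Algebra Fq E2]
    (hE2 : Module.finrank Fq E2 = u) :
    (Nat.card {α : E1 | Module.finrank Fq
          (Submodule.span Fq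
            (Set.range fun i : Fin (p ^ (Nat.log p k + 1) * u) => α ^ q ^ (i : ℕ)))
          = p ^ (Nat.log p k + 1) * u - k} : ℝ) / q ^ (p ^ (Nat.log p k + 1) * u)
      ≥ ((Nat.card {α : E2 | Module.finrank Fq
            (Submodule.span Fq (Set.range fun i : Fin u => α ^ q ^ (i : ℕ)))
            = u} : ℝ) / q ^ u) / q ^ k :=
  density_k_normal_ge_general q p k u hp hu Fq hcard E1 hE1 E2 hE2
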